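/- arXiv:math/0409180 — 5 statements merged into one kernel-verified Lean document; each statement's English description precedes it below -/
import Mathlib

section
/- Let (Ω, 𝓕, ℙ) be a probability space and let 𝓖 ⊆ 𝓗 ⊆ 𝓕 be sub-σ-algebras. Let T, C : Ω → ℝ be random variables. Assume: (i) for all t₁, t₂ ∈ ℝ, E[1_{T<t₁}·1_{C<t₂} | 𝓗] = E[1_{T<t₁} | 𝓗] · E[1_{C<t₂} | 𝓗] almost surely (T and C are conditionally independent given 𝓗); and (ii) for all t₂ ∈ ℝ, E[1_{C<t₂} | 𝓗] = E[1_{C<t₂} | 𝓖] almost surely (the conditional distribution of C given 𝓗 depends only on 𝓖). Then for all t₁, t₂ ∈ ℝ, E[1_{T<t₁}·1_{C<t₂} | 𝓖] = E[1_{T<t₁} | 𝓖] · E[1_{C<t₂} | 𝓖] almost surely; that is, T and C are conditionally independent given 𝓖. -/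
open MeasureTheory
open scoped NNReal

/-- Lemma 3.1 (first claim): if `T` and `C` are conditionally independent given the
sub-σ-algebra `𝓗`, and the conditional distribution of `C` given `𝓗` depends only on the
smaller sub-σ-algebra `𝓖 ⊆ 𝓗`, then `T` and `C` are conditionally independent given `𝓖`. -/
theorem conditional_independence_given_condensed_information
    {Ω : Type*} (𝓖 𝓗 : MeasurableSpace Ω) [m : MeasurableSpace Ω] (μ : Measure Ω) [IsProbabilityMeasure μ]
    (hGH : 𝓖 ≤ 𝓗) (hHF : 𝓗 ≤ m)
    (T C : Ω → ℝ) (hT : Measurable T) (hC : Measurable C)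
    (hindep : ∀ t₁ t₂ : ℝ,
      μ[(fun ω => (if T ω < t₁ then (1 : ℝ) else 0) * (if C ω < t₂ then (1 : ℝ) else 0)) | 𝓗]
        =ᵐ[μ] fun ω =>
          (μ[(fun ω' => if T ω' < t₁ then (1 : ℝ) else 0) | 𝓗]) ω *
          (μ[(fun ω' => if C ω' < t₂ then (1 : ℝ) else 0) | 𝓗]) ω)
    (hCdep : ∀ t₂ : ℝ,
      μ[(fun ω' => if C ω' < t₂ then (1 : ℝ) else 0) | 𝓗]
        =ᵐ[μ] μ[(fun ω' => if C ω' < t₂ then (1 : ℝ) else 0) | 𝓖]) :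
    ∀ t₁ t₂ : ℝ,
      μ[(fun ω => (if T ω < t₁ then (1 : ℝ) else 0) * (if C ω < t₂ then (1 : ℝ) else 0)) | 𝓖]
        =ᵐ[μ] fun ω =>
          (μ[(fun ω' => if T ω' < t₁ then (1 : ℝ) else 0) | 𝓖]) ω *
          (μ[(fun ω' => if C ω' < t₂ then (1 : ℝ) else 0) | 𝓖]) ω := by
  intro t₁ t₂
  set f1 : Ω → ℝ := fun ω => if T ω < t₁ then (1 : ℝ) else 0 with hf1def
  set f2 : Ω → ℝ := fun ω => if C ω < t₂ then (1 : ℝ) else 0 with hf2def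
  have hGF : 𝓖 ≤ m := hGH.trans hHF
  have hmf1 : Measurable[m] f1 := Measurable.ite (hT measurableSet_Iio : MeasurableSet[m] (T ⁻¹' Set.Iio t₁)) measurable_const measurable_const
  have hmf2 : Measurable[m] f2 := Measurable.ite (hC measurableSet_Iio : MeasurableSet[m] (C ⁻¹' Set.Iio t₂)) measurable_const measurable_const
  have hb1 : ∀ ω, ‖f1 ω‖ ≤ 1 := by
    intro ω; simp only [hf1def]; split <;> simp
  have hif1 : Integrable f1 μ := by
    refine Integrable.mono' (integrable_const (1:ℝ)) (hmf1.aestronglyMeasurable (μ := μ)) ?_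
    exact Filter.Eventually.of_forall hb1
  -- integrability of the 𝓖-conditional expectation of f2, with a.e. bound 1
  have hg : Integrable (μ[f2|𝓖]) μ := integrable_condExp
  have hbg : ∀ᵐ ω ∂μ, |(μ[f2|𝓖]) ω| ≤ (1 : ℝ≥0) := by
    refine ae_bdd_condExp_of_ae_bdd ?_
    refine Filter.Eventually.of_forall fun ω => ?_
    simp only [hf2def]; split <;> simp
  have hint : Integrable (μ[f1|𝓗]) μ := integrable_condExp
  have hprod : Integrable (μ[f2|𝓖] * μ[f1|𝓗]) μ := by
    refine Integrable.bdd_mul (c := 1) hint ((stronglyMeasurable_condExp.mono hGF).aestronglyMeasurable) ?_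
    · filter_upwards [hbg] with ω hω
      simpa [Real.norm_eq_abs] using hω
  have step1 : μ[(fun ω => f1 ω * f2 ω)|𝓖] =ᵐ[μ] μ[μ[(fun ω => f1 ω * f2 ω)|𝓗]|𝓖] :=
    (condExp_condExp_of_le hGH hHF).symm
  have step2 : μ[μ[(fun ω => f1 ω * f2 ω)|𝓗]|𝓖]
      =ᵐ[μ] μ[(fun ω => (μ[f1|𝓗]) ω * (μ[f2|𝓗]) ω)|𝓖] :=
    condExp_congr_ae (hindep t₁ t₂)
  have hmul : (fun ω => (μ[f1|𝓗]) ω * (μ[f2|𝓗]) ω)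
      =ᵐ[μ] (μ[f2|𝓖] * μ[f1|𝓗]) := by
    filter_upwards [hCdep t₂] with ω hω
    simp [Pi.mul_apply, hf2def, hω, mul_comm]
  have step3 : μ[(fun ω => (μ[f1|𝓗]) ω * (μ[f2|𝓗]) ω)|𝓖]
      =ᵐ[μ] μ[(μ[f2|𝓖] * μ[f1|𝓗])|𝓖] := condExp_congr_ae hmul
  have step4 : μ[(μ[f2|𝓖] * μ[f1|𝓗])|𝓖] =ᵐ[μ] (μ[f2|𝓖]) * μ[μ[f1|𝓗]|𝓖] :=
    condExp_mul_of_stronglyMeasurable_left stronglyMeasurable_condExp hprod hint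
  have step5 : μ[μ[f1|𝓗]|𝓖] =ᵐ[μ] μ[f1|𝓖] := condExp_condExp_of_le hGH hHF
  refine ((((step1.trans step2).trans step3).trans step4).trans ?_)
  filter_upwards [step5] with ω hω
  simp [Pi.mul_apply, hω, mul_comm]
end

section
/- Let (Ω, 𝓕, ℙ) be a probability space and let T, C : Ω → ℝ be independent random variables, where T is nonnegative and has probability density function f : ℝ → ℝ (f ≥ 0, measurable) with respect to Lebesgue measure. Then for every t ≥ 0, ℙ({ω : T(ω) ≤ t and T(ω) ≤ C(ω)}) = ∫_{u ∈ [0,t]} f(u) · ℙ({ω : C(ω) ≥ u}) du, where the integral is a Lebesgue integral over the interval [0, t] (the map u ↦ ℙ(C ≥ u) is antitone, hence measurable). -/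
open MeasureTheory ProbabilityTheory

/-- Key computation in Lemma 3.1: for independent `T` and `C`, with `T ≥ 0` having density `f`
with respect to Lebesgue measure, the subdistribution function of the uncensored minimum
satisfies `P(T ≤ t, T ≤ C) = ∫_{[0,t]} f(u) · P(C ≥ u) du`. -/
theorem subdistribution_of_uncensored_minimum
    {Ω : Type*} [MeasurableSpace Ω] (μ : Measure Ω) [IsProbabilityMeasure μ]
    (T C : Ω → ℝ) (hT : Measurable T) (hC : Measurable C)
    (hTC : IndepFun T C μ)
    (hTnonneg : ∀ ω, 0 ≤ T ω)
    (f : ℝ → ℝ) (hf : Measurable f) (hfnonneg : ∀ u, 0 ≤ f u)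
    (hpdf : μ.map T = volume.withDensity fun u => ENNReal.ofReal (f u))
    (t : ℝ) (ht : 0 ≤ t) :
    (μ {ω | T ω ≤ t ∧ T ω ≤ C ω}).toReal
      = ∫ u in Set.Icc (0 : ℝ) t, f u * (μ {ω | u ≤ C ω}).toReal := by
  set κ : Measure ℝ := μ.map C with hκ
  haveI : IsProbabilityMeasure κ := Measure.isProbabilityMeasure_map hC.aemeasurable
  haveI : IsProbabilityMeasure (μ.map T) := Measure.isProbabilityMeasure_map hT.aemeasurable
  set g : ℝ → ENNReal := fun u => κ (Set.Ici u) with hg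
  have hganti : Antitone g := fun u v huv =>
    measure_mono (Set.Ici_subset_Ici.mpr huv)
  have hgmeas : Measurable g := hganti.measurable
  have hgfin : ∀ u, g u ≠ ⊤ := fun u => measure_ne_top κ _
  have hgC : ∀ u, μ {ω | u ≤ C ω} = g u := by
    intro u
    show μ {ω | u ≤ C ω} = μ.map C (Set.Ici u)
    rw [Measure.map_apply hC measurableSet_Ici]
    rfl
  -- joint law
  have hmap : μ.map (fun ω => (T ω, C ω)) = (μ.map T).prod κ :=
    (indepFun_iff_map_prod_eq_prod_map_map hT.aemeasurable hC.aemeasurable).mp hTC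
  set S : Set (ℝ × ℝ) := {p : ℝ × ℝ | p.1 ≤ t ∧ p.1 ≤ p.2} with hS
  have hSmeas : MeasurableSet S := by
    apply MeasurableSet.inter
    · exact measurableSet_le measurable_fst measurable_const
    · exact measurableSet_le measurable_fst measurable_snd
  have hset : {ω | T ω ≤ t ∧ T ω ≤ C ω} = (fun ω => (T ω, C ω)) ⁻¹' S := rfl
  have h1 : μ {ω | T ω ≤ t ∧ T ω ≤ C ω} = ((μ.map T).prod κ) S := by
    rw [hset, ← Measure.map_apply (hT.prodMk hC) hSmeas, hmap]
  have hsec : (fun u => κ (Prod.mk u ⁻¹' S)) = (Set.Iic t).indicator g := by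
    ext u
    by_cases hu : u ≤ t
    · have : Prod.mk u ⁻¹' S = Set.Ici u := by
        ext c; simp [hS, hu]
      rw [this, Set.indicator_of_mem (Set.mem_Iic.mpr hu)]
    · have : Prod.mk u ⁻¹' S = ∅ := by
        ext c; simp [hS, hu]
      rw [this, Set.indicator_of_notMem (by simpa using hu)]
      simp
  have h2 : ((μ.map T).prod κ) S
      = ∫⁻ u, ENNReal.ofReal (f u) * (Set.Iic t).indicator g u := by
    rw [Measure.prod_apply hSmeas, hpdf]
    rw [lintegral_withDensity_eq_lintegral_mul _ (hf.ennreal_ofReal)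
      (by rw [hsec]; exact hgmeas.indicator measurableSet_Iic)]
    simp only [Pi.mul_apply]
    exact lintegral_congr fun u => by rw [← hsec]
  -- f vanishes a.e. on negatives
  have hneg : (fun u => ENNReal.ofReal (f u)) =ᵐ[volume.restrict (Set.Iio (0:ℝ))] 0 := by
    rw [← lintegral_eq_zero_iff hf.ennreal_ofReal]
    have : (∫⁻ u in Set.Iio (0:ℝ), ENNReal.ofReal (f u)) = μ.map T (Set.Iio 0) := by
      rw [hpdf, withDensity_apply _ measurableSet_Iio]
    rw [this, Measure.map_apply hT measurableSet_Iio]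
    have : T ⁻¹' Set.Iio 0 = ∅ := by
      ext ω; simp [Set.mem_Iio, not_lt.mpr (hTnonneg ω)]
    rw [this, measure_empty]
  -- split the integral
  have h3 : ∫⁻ u, ENNReal.ofReal (f u) * (Set.Iic t).indicator g u
      = ∫⁻ u in Set.Icc 0 t, ENNReal.ofReal (f u) * g u := by
    have heq : (fun u => ENNReal.ofReal (f u) * (Set.Iic t).indicator g u)
        = (Set.Iic t).indicator (fun u => ENNReal.ofReal (f u) * g u) := by
      ext u
      by_cases hu : u ≤ t
      · rw [Set.indicator_of_mem (Set.mem_Iic.mpr hu), Set.indicator_of_mem (Set.mem_Iic.mpr hu)]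
      · rw [Set.indicator_of_notMem (by simpa using hu), Set.indicator_of_notMem (by simpa using hu), mul_zero]
    rw [heq, lintegral_indicator measurableSet_Iic]
    have hunion : Set.Iic t = Set.Iio (0:ℝ) ∪ Set.Icc 0 t := by
      ext u
      simp only [Set.mem_Iic, Set.mem_union, Set.mem_Iio, Set.mem_Icc]
      constructor
      · intro h; rcases lt_or_ge u 0 with h' | h'
        · exact Or.inl h'
        · exact Or.inr ⟨h', h⟩
      · rintro (h | ⟨_, h⟩)
        · exact h.le.trans ht
        · exact h
    rw [hunion, lintegral_union measurableSet_Icc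
      (by rw [Set.disjoint_left]; intro u hu hu'; exact absurd hu'.1 (not_le.mpr hu))]
    have hz : (∫⁻ u in Set.Iio (0:ℝ), ENNReal.ofReal (f u) * g u) = 0 := by
      rw [← lintegral_zero]
      apply lintegral_congr_ae
      filter_upwards [hneg] with u hu
      simp only [Pi.zero_apply] at hu ⊢
      rw [hu, zero_mul]
    rw [hz, zero_add]
  -- convert to real integral
  have h4 : ∫ u in Set.Icc (0:ℝ) t, f u * (μ {ω | u ≤ C ω}).toReal
      = (∫⁻ u in Set.Icc (0:ℝ) t, ENNReal.ofReal (f u) * g u).toReal := by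
    rw [integral_eq_lintegral_of_nonneg_ae]
    · congr 1
      apply lintegral_congr fun u => ?_
      rw [hgC u, ENNReal.ofReal_mul (hfnonneg u), ENNReal.ofReal_toReal (hgfin u)]
    · filter_upwards with u
      exact mul_nonneg (hfnonneg u) ENNReal.toReal_nonneg
    · apply Measurable.aestronglyMeasurable
      apply hf.mul
      have : (fun u => (μ {ω | u ≤ C ω}).toReal) = fun u => (g u).toReal := by
        ext u; rw [hgC u]
      rw [this]
      exact hgmeas.ennreal_toReal
  rw [h1, h2, h3, h4]
end

section
/- Let (Ω, 𝓕, ℙ) be a probability space and let T, C : Ω → ℝ be independent random variables, where T is nonnegative and has probability density function f : ℝ → ℝ (f ≥ 0, measurable) with respect to Lebesgue measure. Fix t ≥ 0 and assume ℙ(T ≥ u) > 0 and ℙ(C ≥ u) > 0 for every u ∈ [0, t]. Then ∫_{u ∈ [0,t]} ( f(u) · ℙ(C ≥ u) ) / ℙ( min(T, C) ≥ u ) du = ∫_{u ∈ [0,t]} f(u) / ℙ(T ≥ u) du; that is, the cumulative crude hazard of the minimum with cause T, ∫₀ᵗ d_u P(T∧C ≤ u, T ≤ C) / P(T∧C ≥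 u), equals the net cumulative hazard of T, ∫₀ᵗ d_u P(T ≤ u)/P(T ≥ u). -/
open MeasureTheory ProbabilityTheory

/-- Unconditional form of the second claim of Lemma 3.1: when `T` and `C` are independent,
the cumulative crude hazard of the minimum with cause `T`,
`∫₀ᵗ f(u)·P(C ≥ u) / P(T ∧ C ≥ u) du`, equals the net cumulative hazard of `T`,
`∫₀ᵗ f(u) / P(T ≥ u) du`. -/
theorem crude_hazard_eq_net_hazard
    {Ω : Type*} [MeasurableSpace Ω] (μ : Measure Ω) [IsProbabilityMeasure μ]
    (T C : Ω → ℝ) (hT : Measurable T) (hC : Measurable C)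
    (hTC : IndepFun T C μ)
    (hTnonneg : ∀ ω, 0 ≤ T ω)
    (f : ℝ → ℝ) (hf : Measurable f) (hfnonneg : ∀ u, 0 ≤ f u)
    (hpdf : μ.map T = volume.withDensity fun u => ENNReal.ofReal (f u))
    (t : ℝ) (ht : 0 ≤ t)
    (hTpos : ∀ u ∈ Set.Icc (0 : ℝ) t, 0 < μ {ω | u ≤ T ω})
    (hCpos : ∀ u ∈ Set.Icc (0 : ℝ) t, 0 < μ {ω | u ≤ C ω}) :
    ∫ u in Set.Icc (0 : ℝ) t,
        f u * (μ {ω | u ≤ C ω}).toReal / (μ {ω | u ≤ min (T ω) (C ω)}).toReal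
      = ∫ u in Set.Icc (0 : ℝ) t, f u / (μ {ω | u ≤ T ω}).toReal := by
  refine setIntegral_congr_fun measurableSet_Icc (fun u hu => ?_)
  have hmin : {ω | u ≤ min (T ω) (C ω)} = T ⁻¹' Set.Ici u ∩ C ⁻¹' Set.Ici u := by
    ext ω; simp [le_min_iff]
  have hindep := hTC.measure_inter_preimage_eq_mul (Set.Ici u) (Set.Ici u)
      measurableSet_Ici measurableSet_Ici
  have hmul : μ {ω | u ≤ min (T ω) (C ω)} = μ {ω | u ≤ T ω} * μ {ω | u ≤ C ω} := by
    rw [hmin, hindep]; rfl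
  have hTfin : μ {ω | u ≤ T ω} ≠ ⊤ := measure_ne_top μ _
  have hCfin : μ {ω | u ≤ C ω} ≠ ⊤ := measure_ne_top μ _
  have hTne : (μ {ω | u ≤ T ω}).toReal ≠ 0 :=
    ENNReal.toReal_ne_zero.2 ⟨(hTpos u hu).ne', hTfin⟩
  have hCne : (μ {ω | u ≤ C ω}).toReal ≠ 0 :=
    ENNReal.toReal_ne_zero.2 ⟨(hCpos u hu).ne', hCfin⟩
  rw [hmul, ENNReal.toReal_mul]
  field_simp
end

section
/- Let (Ω, 𝓕, μ) be a probability space, let τ > 0, let Y : Ω → ℝ be measurable with Y ≤ τ almost surely and μ({ω : Y(ω) = τ}) > 0, let R : Ω → ℝ be bounded, nonnegative and measurable, and let L : Ω → ℝᵈ be bounded and measurable. Then the population log partial likelihood L̃₁(β) = ∫_Ω R(ω) · ( ⟪β, L(ω)⟫ − log ∫_Ω 1_{Y(ω') ≥ Y(ω)} exp(⟪β, L(ω')⟫) dμ(ω') ) dμ(ω) is well defined (every inner integral is finite and strictly positive, and the outer integral is finite) and is a concave function of β on all of ℝᵈ. -/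
open MeasureTheory RealInnerProductSpace

lemma exp_integral_holder {Ω : Type*} [MeasurableSpace Ω] (ν : Measure Ω)
    (a b : Ω → ℝ)
    {t s : ℝ} (ht : 0 < t) (hs : 0 < s) (hts : t + s = 1)
    (ha : Measurable a) (hb : Measurable b)
    (hia : Integrable (fun ω => Real.exp (a ω)) ν)
    (hib : Integrable (fun ω => Real.exp (b ω)) ν)
    (hic : Integrable (fun ω => Real.exp (t * a ω + s * b ω)) ν) :
    ∫ ω, Real.exp (t * a ω + s * b ω) ∂ν ≤
      (∫ ω, Real.exp (a ω) ∂ν) ^ t * (∫ ω, Real.exp (b ω) ∂ν) ^ s := by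
  have hpq : (1/t).HolderConjugate (1/s) := by
    constructor
    · rw [one_div, inv_inv, one_div, inv_inv, inv_one]; exact hts
    · positivity
    · positivity
  set f : Ω → ENNReal := fun ω => ENNReal.ofReal (Real.exp (t * a ω)) with hf_def
  set g : Ω → ENNReal := fun ω => ENNReal.ofReal (Real.exp (s * b ω)) with hg_def
  have hf : AEMeasurable f ν :=
    ((Real.measurable_exp.comp (ha.const_mul t)).ennreal_ofReal).aemeasurable
  have hg : AEMeasurable g ν :=
    ((Real.measurable_exp.comp (hb.const_mul s)).ennreal_ofReal).aemeasurable
  have H := ENNReal.lintegral_mul_le_Lp_mul_Lq ν hpq hf hg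
  have hfg : ∀ ω, f ω * g ω = ENNReal.ofReal (Real.exp (t * a ω + s * b ω)) := by
    intro ω
    rw [hf_def, hg_def, ← ENNReal.ofReal_mul (Real.exp_nonneg _), ← Real.exp_add]
  have key : ∀ (u x : ℝ), 0 < u → Real.exp (u * x) ^ (1/u) = Real.exp x := by
    intro u x hu
    rw [← Real.exp_mul, mul_one_div, mul_comm u x, mul_div_assoc, div_self hu.ne', mul_one]
  have hfp : ∀ ω, f ω ^ (1/t) = ENNReal.ofReal (Real.exp (a ω)) := fun ω => by
    rw [hf_def, ENNReal.ofReal_rpow_of_pos (Real.exp_pos _), key t _ ht]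
  have hgp : ∀ ω, g ω ^ (1/s) = ENNReal.ofReal (Real.exp (b ω)) := fun ω => by
    rw [hg_def, ENNReal.ofReal_rpow_of_pos (Real.exp_pos _), key s _ hs]
  simp only [Pi.mul_apply, hfg, hfp, hgp, one_div_one_div] at H
  rw [← MeasureTheory.ofReal_integral_eq_lintegral_ofReal hic
      (Filter.Eventually.of_forall fun ω => Real.exp_nonneg _),
    ← MeasureTheory.ofReal_integral_eq_lintegral_ofReal hia
      (Filter.Eventually.of_forall fun ω => Real.exp_nonneg _),
    ← MeasureTheory.ofReal_integral_eq_lintegral_ofReal hib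
      (Filter.Eventually.of_forall fun ω => Real.exp_nonneg _),
    ENNReal.ofReal_rpow_of_nonneg (integral_nonneg fun ω => Real.exp_nonneg _) ht.le,
    ENNReal.ofReal_rpow_of_nonneg (integral_nonneg fun ω => Real.exp_nonneg _) hs.le,
    ← ENNReal.ofReal_mul (Real.rpow_nonneg (integral_nonneg fun ω => Real.exp_nonneg _) _)] at H
  exact (ENNReal.ofReal_le_ofReal_iff (mul_nonneg
    (Real.rpow_nonneg (integral_nonneg fun ω => Real.exp_nonneg _) _)
    (Real.rpow_nonneg (integral_nonneg fun ω => Real.exp_nonneg _) _))).mp H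

set_option maxHeartbeats 1000000 in
/-- The population log partial likelihood
`L̃₁(β) = ∫ R(ω) (⟪β, L(ω)⟫ − log ∫ 1_{Y(ω') ≥ Y(ω)} e^{⟪β, L(ω')⟫} dμ(ω')) dμ(ω)`
is well defined (every inner integral is finite and, for almost every `ω`, strictly positive;
and the outer integrand is integrable) and is a concave function of `β` on `ℝᵈ`. -/
theorem population_log_partial_likelihood_concave
    {Ω : Type*} [MeasurableSpace Ω] (μ : Measure Ω) [IsProbabilityMeasure μ]
    (d : ℕ) (τ : ℝ) (hτ : 0 < τ)
    (Y : Ω → ℝ) (hY : Measurable Y) (hYle : ∀ᵐ ω ∂μ, Y ω ≤ τ)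
    (hYτ : 0 < μ {ω | Y ω = τ})
    (R : Ω → ℝ) (hR : Measurable R) (hRnonneg : ∀ ω, 0 ≤ R ω)
    (hRbdd : ∃ M : ℝ, ∀ ω, R ω ≤ M)
    (L : Ω → EuclideanSpace ℝ (Fin d)) (hL : Measurable L)
    (hLbdd : ∃ M : ℝ, ∀ ω, ‖L ω‖ ≤ M) :
    (∀ β : EuclideanSpace ℝ (Fin d),
        (∀ ω : Ω, IntegrableOn (fun ω' => Real.exp ⟪β, L ω'⟫) {ω' | Y ω ≤ Y ω'} μ) ∧
        (∀ᵐ ω ∂μ, 0 < ∫ ω' in {ω' | Y ω ≤ Y ω'}, Real.exp ⟪β, L ω'⟫ ∂μ) ∧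
        Integrable (fun ω => R ω *
          (⟪β, L ω⟫ -
            Real.log (∫ ω' in {ω' | Y ω ≤ Y ω'}, Real.exp ⟪β, L ω'⟫ ∂μ))) μ) ∧
    ConcaveOn ℝ Set.univ (fun β : EuclideanSpace ℝ (Fin d) =>
      ∫ ω, R ω *
        (⟪β, L ω⟫ -
          Real.log (∫ ω' in {ω' | Y ω ≤ Y ω'}, Real.exp ⟪β, L ω'⟫ ∂μ)) ∂μ) := by
  classical
  obtain ⟨MR₀, hMR₀⟩ := hRbdd
  obtain ⟨ML₀, hML₀⟩ := hLbdd
  set MR : ℝ := max MR₀ 0 with hMR_def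
  set M : ℝ := max ML₀ 0 with hM_def
  have hMR : ∀ ω, R ω ≤ MR := fun ω => (hMR₀ ω).trans (le_max_left _ _)
  have hM : ∀ ω, ‖L ω‖ ≤ M := fun ω => (hML₀ ω).trans (le_max_left _ _)
  have hM0 : 0 ≤ M := le_max_right _ _
  -- inner product bound
  have hinner : ∀ (β : EuclideanSpace ℝ (Fin d)) ω, |⟪β, L ω⟫| ≤ ‖β‖ * M := fun β ω =>
    (abs_real_inner_le_norm β (L ω)).trans
      (mul_le_mul_of_nonneg_left (hM ω) (norm_nonneg β))
  have hmeas : ∀ β : EuclideanSpace ℝ (Fin d), Measurable fun ω => ⟪β, L ω⟫ :=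
    fun β => measurable_const.inner hL
  -- global integrability of exp inner
  have hIntG : ∀ β : EuclideanSpace ℝ (Fin d),
      Integrable (fun ω' => Real.exp ⟪β, L ω'⟫) μ := by
    intro β
    refine (integrable_const (Real.exp (‖β‖ * M))).mono'
      ((Real.measurable_exp.comp (hmeas β)).aestronglyMeasurable)
      (Filter.Eventually.of_forall fun ω => ?_)
    rw [Real.norm_eq_abs, abs_of_pos (Real.exp_pos _)]
    exact Real.exp_le_exp.mpr ((le_abs_self _).trans (hinner β ω))
  have hInt : ∀ (β : EuclideanSpace ℝ (Fin d)) (S : Set Ω),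
      IntegrableOn (fun ω' => Real.exp ⟪β, L ω'⟫) S μ :=
    fun β S => (hIntG β).integrableOn
  -- the positive mass of {Y = τ}
  set m : ℝ := (μ {ω | Y ω = τ}).toReal with hm_def
  have hm_pos : 0 < m := ENNReal.toReal_pos hYτ.ne' (measure_ne_top μ _)
  -- lower bound for inner integrals
  have hlow : ∀ (β : EuclideanSpace ℝ (Fin d)) (ω : Ω), Y ω ≤ τ →
      Real.exp (-(‖β‖ * M)) * m ≤ ∫ ω' in {ω' | Y ω ≤ Y ω'}, Real.exp ⟪β, L ω'⟫ ∂μ := by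
    intro β ω hω
    have hsub : {ω' | Y ω' = τ} ⊆ {ω' | Y ω ≤ Y ω'} := fun ω' hω' => by
      simp only [Set.mem_setOf_eq] at *; rw [hω']; exact hω
    have hμm : m ≤ (μ {ω' | Y ω ≤ Y ω'}).toReal :=
      ENNReal.toReal_mono (measure_ne_top μ _) (measure_mono hsub)
    have h1 : Real.exp (-(‖β‖ * M)) * m
        ≤ Real.exp (-(‖β‖ * M)) * (μ {ω' | Y ω ≤ Y ω'}).toReal :=
      mul_le_mul_of_nonneg_left hμm (Real.exp_nonneg _)
    refine h1.trans ?_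
    rw [mul_comm, ← smul_eq_mul, ← measureReal_def, ← setIntegral_const]
    refine setIntegral_mono_on (integrableOn_const (measure_ne_top μ _))
      (hInt β _) (measurableSet_le measurable_const hY) (fun x _ => ?_)
    exact Real.exp_le_exp.mpr (neg_le_of_abs_le (hinner β x))
  -- a.e. positivity
  have hpos : ∀ β : EuclideanSpace ℝ (Fin d),
      ∀ᵐ ω ∂μ, 0 < ∫ ω' in {ω' | Y ω ≤ Y ω'}, Real.exp ⟪β, L ω'⟫ ∂μ := by
    intro β
    filter_upwards [hYle] with ω hω
    exact lt_of_lt_of_le (mul_pos (Real.exp_pos _) hm_pos) (hlow β ω hω)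
  -- upper bound for inner integrals
  have hup : ∀ (β : EuclideanSpace ℝ (Fin d)) (S : Set Ω),
      ∫ ω' in S, Real.exp ⟪β, L ω'⟫ ∂μ ≤ Real.exp (‖β‖ * M) := by
    intro β S
    have h1 : ∫ ω' in S, Real.exp ⟪β, L ω'⟫ ∂μ ≤ ∫ ω', Real.exp ⟪β, L ω'⟫ ∂μ :=
      setIntegral_le_integral (hIntG β)
        (Filter.Eventually.of_forall fun ω => Real.exp_nonneg _)
    refine h1.trans ?_
    calc ∫ ω', Real.exp ⟪β, L ω'⟫ ∂μ ≤ ∫ _ω', Real.exp (‖β‖ * M) ∂μ :=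
          integral_mono (hIntG β) (integrable_const _)
            (fun ω => Real.exp_le_exp.mpr ((le_abs_self _).trans (hinner β ω)))
      _ = Real.exp (‖β‖ * M) := by simp
  -- measurability of the outer integrand (via antitonicity in y)
  have hFmeas : ∀ β : EuclideanSpace ℝ (Fin d),
      Measurable fun ω => ∫ ω' in {ω' | Y ω ≤ Y ω'}, Real.exp ⟪β, L ω'⟫ ∂μ := by
    intro β
    have hanti : Antitone fun y : ℝ => ∫ ω' in {ω' | y ≤ Y ω'}, Real.exp ⟪β, L ω'⟫ ∂μ := by
      intro y₁ y₂ h12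
      exact setIntegral_mono_set (hInt β _)
        (Filter.Eventually.of_forall fun ω => Real.exp_nonneg _)
        (HasSubset.Subset.eventuallyLE fun ω' hω' => le_trans h12 hω')
    exact hanti.measurable.comp hY
  -- the log bound
  have hlog_bound : ∀ β : EuclideanSpace ℝ (Fin d), ∀ ω : Ω, Y ω ≤ τ →
      |Real.log (∫ ω' in {ω' | Y ω ≤ Y ω'}, Real.exp ⟪β, L ω'⟫ ∂μ)|
        ≤ max (‖β‖ * M) (-(Real.log (Real.exp (-(‖β‖ * M)) * m))) := by
    intro β ω hω
    have hFpos : 0 < ∫ ω' in {ω' | Y ω ≤ Y ω'}, Real.exp ⟪β, L ω'⟫ ∂μ :=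
      lt_of_lt_of_le (mul_pos (Real.exp_pos _) hm_pos) (hlow β ω hω)
    rw [abs_le]
    constructor
    · have := Real.log_le_log (mul_pos (Real.exp_pos _) hm_pos) (hlow β ω hω)
      have h2 := le_max_right (‖β‖ * M) (-(Real.log (Real.exp (-(‖β‖ * M)) * m)))
      linarith
    · have := Real.log_le_log hFpos (hup β _)
      rw [Real.log_exp] at this
      exact this.trans (le_max_left _ _)
  -- the outer integrand: measurability
  have houter_meas : ∀ β : EuclideanSpace ℝ (Fin d),
      Measurable fun ω => R ω * (⟪β, L ω⟫ -
        Real.log (∫ ω' in {ω' | Y ω ≤ Y ω'}, Real.exp ⟪β, L ω'⟫ ∂μ)) :=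
    fun β => hR.mul ((hmeas β).sub (Real.measurable_log.comp (hFmeas β)))
  -- the outer integrand: integrability
  have houter_int : ∀ β : EuclideanSpace ℝ (Fin d),
      Integrable (fun ω => R ω * (⟪β, L ω⟫ -
        Real.log (∫ ω' in {ω' | Y ω ≤ Y ω'}, Real.exp ⟪β, L ω'⟫ ∂μ))) μ := by
    intro β
    set B : ℝ := max (‖β‖ * M) (-(Real.log (Real.exp (-(‖β‖ * M)) * m))) with hB_def
    refine (integrable_const (MR * (‖β‖ * M + B))).mono'
      (houter_meas β).aestronglyMeasurable ?_
    filter_upwards [hYle] with ω hω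
    rw [Real.norm_eq_abs, abs_mul, abs_of_nonneg (hRnonneg ω)]
    refine mul_le_mul (hMR ω) ?_ (abs_nonneg _) ((hRnonneg ω).trans (hMR ω))
    exact (abs_sub _ _).trans (add_le_add (hinner β ω) (hlog_bound β ω hω))
  refine ⟨fun β => ⟨fun ω => hInt β _, hpos β, houter_int β⟩, convex_univ, ?_⟩
  intro β₁ _ β₂ _ t s ht hs hts
  rcases ht.eq_or_lt with rfl | ht'
  · simp only [zero_add] at hts
    subst hts
    simp
  rcases hs.eq_or_lt with rfl | hs'
  · simp only [add_zero] at hts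
    subst hts
    simp
  -- main case: 0 < t, 0 < s
  set F : EuclideanSpace ℝ (Fin d) → Ω → ℝ := fun β ω =>
    R ω * (⟪β, L ω⟫ - Real.log (∫ ω' in {ω' | Y ω ≤ Y ω'}, Real.exp ⟪β, L ω'⟫ ∂μ)) with hF_def
  have hptwise : ∀ᵐ ω ∂μ, t * F β₁ ω + s * F β₂ ω ≤ F (t • β₁ + s • β₂) ω := by
    filter_upwards [hYle, hpos β₁, hpos β₂, hpos (t • β₁ + s • β₂)] with ω hω h1 h2 hc
    simp only [hF_def]
    set S : Set Ω := {ω' | Y ω ≤ Y ω'} with hS_def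
    have hinner_eq : ∀ ω' : Ω, ⟪t • β₁ + s • β₂, L ω'⟫ = t * ⟪β₁, L ω'⟫ + s * ⟪β₂, L ω'⟫ := by
      intro ω'
      rw [inner_add_left, real_inner_smul_left, real_inner_smul_left]
    have hcongr : ∫ ω' in S, Real.exp ⟪t • β₁ + s • β₂, L ω'⟫ ∂μ
        = ∫ ω' in S, Real.exp (t * ⟪β₁, L ω'⟫ + s * ⟪β₂, L ω'⟫) ∂μ := by
      congr 1 with ω'; rw [hinner_eq]
    have hhold := exp_integral_holder (μ.restrict S)
      (fun ω' => ⟪β₁, L ω'⟫) (fun ω' => ⟪β₂, L ω'⟫) ht' hs' hts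
      (hmeas β₁) (hmeas β₂) (hInt β₁ S) (hInt β₂ S)
      (by
        have := hInt (t • β₁ + s • β₂) S
        simp only [IntegrableOn] at this ⊢
        refine this.congr ?_
        exact Filter.Eventually.of_forall fun ω' => congrArg Real.exp (hinner_eq ω'))
    have hFc_le : ∫ ω' in S, Real.exp ⟪t • β₁ + s • β₂, L ω'⟫ ∂μ
        ≤ (∫ ω' in S, Real.exp ⟪β₁, L ω'⟫ ∂μ) ^ t * (∫ ω' in S, Real.exp ⟪β₂, L ω'⟫ ∂μ) ^ s := by
      rw [hcongr]; exact hhold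
    have hlog_le : Real.log (∫ ω' in S, Real.exp ⟪t • β₁ + s • β₂, L ω'⟫ ∂μ)
        ≤ t * Real.log (∫ ω' in S, Real.exp ⟪β₁, L ω'⟫ ∂μ)
          + s * Real.log (∫ ω' in S, Real.exp ⟪β₂, L ω'⟫ ∂μ) := by
      have := Real.log_le_log hc hFc_le
      rwa [Real.log_mul (Real.rpow_pos_of_pos h1 t).ne' (Real.rpow_pos_of_pos h2 s).ne',
        Real.log_rpow h1, Real.log_rpow h2] at this
    have hkey : t * (⟪β₁, L ω⟫ - Real.log (∫ ω' in S, Real.exp ⟪β₁, L ω'⟫ ∂μ))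
        + s * (⟪β₂, L ω⟫ - Real.log (∫ ω' in S, Real.exp ⟪β₂, L ω'⟫ ∂μ))
        ≤ ⟪t • β₁ + s • β₂, L ω⟫
          - Real.log (∫ ω' in S, Real.exp ⟪t • β₁ + s • β₂, L ω'⟫ ∂μ) := by
      rw [hinner_eq ω]
      nlinarith [hlog_le]
    calc t * (R ω * (⟪β₁, L ω⟫ - Real.log (∫ ω' in S, Real.exp ⟪β₁, L ω'⟫ ∂μ)))
          + s * (R ω * (⟪β₂, L ω⟫ - Real.log (∫ ω' in S, Real.exp ⟪β₂, L ω'⟫ ∂μ)))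
        = R ω * (t * (⟪β₁, L ω⟫ - Real.log (∫ ω' in S, Real.exp ⟪β₁, L ω'⟫ ∂μ))
          + s * (⟪β₂, L ω⟫ - Real.log (∫ ω' in S, Real.exp ⟪β₂, L ω'⟫ ∂μ))) := by ring
      _ ≤ R ω * (⟪t • β₁ + s • β₂, L ω⟫
          - Real.log (∫ ω' in S, Real.exp ⟪t • β₁ + s • β₂, L ω'⟫ ∂μ)) :=
          mul_le_mul_of_nonneg_left hkey (hRnonneg ω)
  have hInt1 := houter_int β₁
  have hInt2 := houter_int β₂
  have hIntc := houter_int (t • β₁ + s • β₂)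
  simp only [smul_eq_mul]
  calc t * ∫ ω, F β₁ ω ∂μ + s * ∫ ω, F β₂ ω ∂μ
      = ∫ ω, (t * F β₁ ω + s * F β₂ ω) ∂μ := by
        rw [integral_add (hInt1.const_mul t) (hInt2.const_mul s),
          integral_const_mul, integral_const_mul]
    _ ≤ ∫ ω, F (t • β₁ + s • β₂) ω ∂μ :=
        integral_mono_ae ((hInt1.const_mul t).add (hInt2.const_mul s)) hIntc hptwise
end

section
/- Let d ≥ 1 and let K : ℝᵈ → ℝ be differentiable with ‖∇K(x)‖ ≤ M / (1 + ‖x‖²) for all x ∈ ℝᵈ, where M ≥ 0 is a constant. Then for all x, y ∈ ℝᵈ, |K(x) − K(y)| ≤ M · ‖x − y‖ · exp(‖x − y‖) / (1 + ‖x‖²). -/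
theorem aux_exp_ineq (a b : ℝ) (hb : 0 ≤ b) (hba : b ≤ a) :
    1 + a ^ 2 ≤ Real.exp (a - b) * (1 + b ^ 2) := by
  have ha : 0 ≤ a := le_trans hb hba
  have hmono : ∀ u v : ℝ, u ≤ v →
      (u - Real.log (1 + u ^ 2)) ≤ (v - Real.log (1 + v ^ 2)) := by
    intro u v huv
    have hderiv : ∀ s : ℝ, HasDerivAt (fun s : ℝ => s - Real.log (1 + s ^ 2))
        (1 - (2 * s) / (1 + s ^ 2)) s := by
      intro s
      have h1 : HasDerivAt (fun s : ℝ => 1 + s ^ 2) (2 * s) s := by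
        simpa using ((hasDerivAt_pow 2 s).const_add 1)
      have h2 := h1.log (by positivity)
      exact (hasDerivAt_id' s).sub h2
    have hmon : Monotone (fun s : ℝ => s - Real.log (1 + s ^ 2)) := by
      apply monotone_of_deriv_nonneg
      · exact fun s => (hderiv s).differentiableAt
      · intro s
        rw [(hderiv s).deriv]
        have hpos : (0:ℝ) < 1 + s ^ 2 := by positivity
        have h2s : (2 * s) / (1 + s ^ 2) ≤ 1 := by
          rw [div_le_one hpos]; nlinarith [sq_nonneg (1 - s)]
        linarith
    exact hmon huv
  have hlog := hmono b a hba
  have h1 : Real.log (1 + a ^ 2) ≤ (a - b) + Real.log (1 + b ^ 2) := by linarith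
  have hpa : (0:ℝ) < 1 + a ^ 2 := by positivity
  have hpb : (0:ℝ) < 1 + b ^ 2 := by positivity
  calc 1 + a ^ 2 = Real.exp (Real.log (1 + a ^ 2)) := (Real.exp_log hpa).symm
    _ ≤ Real.exp ((a - b) + Real.log (1 + b ^ 2)) := Real.exp_le_exp.2 h1
    _ = Real.exp (a - b) * (1 + b ^ 2) := by rw [Real.exp_add, Real.exp_log hpb]

/-- Key deterministic estimate in the proof of Lemma A.2: if a differentiable kernel
`K : ℝᵈ → ℝ` satisfies `‖∇K(x)‖ ≤ M/(1 + ‖x‖²)`, then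
`|K(x) − K(y)| ≤ M·‖x − y‖·e^{‖x − y‖}/(1 + ‖x‖²)`. -/
theorem kernel_difference_bound
    (d : ℕ) (hd : 1 ≤ d) (K : EuclideanSpace ℝ (Fin d) → ℝ)
    (hK : Differentiable ℝ K) (M : ℝ) (hM : 0 ≤ M)
    (hgrad : ∀ x, ‖gradient K x‖ ≤ M / (1 + ‖x‖ ^ 2)) :
    ∀ x y : EuclideanSpace ℝ (Fin d),
      |K x - K y| ≤ M * ‖x - y‖ * Real.exp ‖x - y‖ / (1 + ‖x‖ ^ 2) := by
  intro x y
  have hpx : (0:ℝ) < 1 + ‖x‖ ^ 2 := by positivity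
  set C : ℝ := M * Real.exp ‖x - y‖ / (1 + ‖x‖ ^ 2) with hC
  have hbound : ∀ z ∈ segment ℝ x y, ‖fderiv ℝ K z‖ ≤ C := by
    intro z hz
    -- ‖x - z‖ ≤ ‖x - y‖
    have hxz : ‖x - z‖ ≤ ‖x - y‖ := by
      obtain ⟨a, b, ha, hb, hab, rfl⟩ := hz
      have hxe : x - (a • x + b • y) = b • (x - y) := by
        have : a = 1 - b := by linarith
        rw [this]; module
      rw [hxe, norm_smul]
      simp only [Real.norm_eq_abs, abs_of_nonneg hb]
      nlinarith [norm_nonneg (x - y)]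
    -- fderiv norm equals gradient norm
    have hfg : ‖fderiv ℝ K z‖ = ‖gradient K z‖ := by
      rw [gradient]
      simp
    have hpz : (0:ℝ) < 1 + ‖z‖ ^ 2 := by positivity
    -- 1 + ‖x‖² ≤ exp(‖x-y‖) * (1 + ‖z‖²)
    have hkey : 1 + ‖x‖ ^ 2 ≤ Real.exp ‖x - y‖ * (1 + ‖z‖ ^ 2) := by
      rcases le_total ‖x‖ ‖z‖ with h | h
      · have h1 : (1:ℝ) ≤ Real.exp ‖x - y‖ := Real.one_le_exp (norm_nonneg _)
        nlinarith [norm_nonneg x, norm_nonneg z]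
      · have := aux_exp_ineq ‖x‖ ‖z‖ (norm_nonneg z) h
        have h2 : ‖x‖ - ‖z‖ ≤ ‖x - y‖ := le_trans (norm_sub_norm_le x z) hxz
        have h3 : Real.exp (‖x‖ - ‖z‖) ≤ Real.exp ‖x - y‖ := Real.exp_le_exp.2 h2
        nlinarith [this, h3, hpz.le]
    have h4 : M / (1 + ‖z‖ ^ 2) ≤ C := by
      rw [hC, div_le_div_iff₀ hpz hpx]
      calc M * (1 + ‖x‖ ^ 2) ≤ M * (Real.exp ‖x - y‖ * (1 + ‖z‖ ^ 2)) :=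
            mul_le_mul_of_nonneg_left hkey hM
        _ = M * Real.exp ‖x - y‖ * (1 + ‖z‖ ^ 2) := by ring
    calc ‖fderiv ℝ K z‖ = ‖gradient K z‖ := hfg
      _ ≤ M / (1 + ‖z‖ ^ 2) := hgrad z
      _ ≤ C := h4
  have hmvt := (convex_segment x y).norm_image_sub_le_of_norm_fderiv_le
    (fun z _ => hK.differentiableAt) hbound
    (right_mem_segment ℝ x y) (left_mem_segment ℝ x y)
  -- hmvt : ‖K x - K y‖ ≤ C * ‖x - y‖
  rw [Real.norm_eq_abs] at hmvt
  calc |K x - K y| ≤ C * ‖x - y‖ := hmvt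
    _ = M * ‖x - y‖ * Real.exp ‖x - y‖ / (1 + ‖x‖ ^ 2) := by
        rw [hC]; ring
end
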